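/- If the matrix [Ψ_1(X̂); Ψ_L(Û); Ψ_L(Ω̂)] has full row rank and the L-step observability matrix 𝒪_L of (A, C) has full column rank n_x (which holds whenever L ≥ ℓ_Σ, the observability index), then rank [Ψ_L(Û); Ψ_L(Ω̂); Ψ_L(Ŷ)] = (n_u + 1)L + n_x. -/

import Mathlib

open Matrix Complex

/-- e^{j ω_k} with ω_k = πk/M. -/
noncomputable def specExp (M k : ℕ) : ℂ := Complex.exp (Complex.I * (Real.pi * k / M))

/-- Ψ_L(S_{[0,M-1]}) = [F_L(S_{[0,M-1]}), F_L^*(S_{[1,M-1]})], with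
    F_L(S_{[m,n]}) = [W_L(e^{jω_m}) ⊗ S_m, ..., W_L(e^{jω_n}) ⊗ S_n],
    W_L(z) = (1, z, ..., z^{L-1})ᵀ; rows indexed by Fin L × α. -/
noncomputable def PsiMat (L M : ℕ) {α : Type} (S : Fin M → α → ℂ) :
    Matrix (Fin L × α) (Fin M ⊕ Fin (M - 1)) ℂ :=
  Matrix.of fun p => Sum.elim
    (fun k : Fin M => specExp M k ^ (p.1 : ℕ) * S k p.2)
    (fun k : Fin (M - 1) => (starRingEnd ℂ)
      (specExp M (k + 1) ^ (p.1 : ℕ) * S ⟨k.1 + 1, by have := k.isLt; omega⟩ p.2))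

/-- L-step observability matrix 𝒪_L = [C; CA; ...; CA^{L-1}]. -/
noncomputable def obsMat (nx ny L : ℕ) (A : Matrix (Fin nx) (Fin nx) ℝ)
    (C : Matrix (Fin ny) (Fin nx) ℝ) : Matrix (Fin L × Fin ny) (Fin nx) ℝ :=
  Matrix.of fun p j => (C * A ^ (p.1 : ℕ)) p.2 j

/-!
Write `Ũ = (Û, Ω̂)` for the full input. From `z X = A X + B̃ Ũ`, the geometric sum
`z^i - A^i = (∑_{j<i} z^j A^(i-1-j)) (z - A)` gives `z^i X = A^i X + ∑_{j<i} z^j A^(i-1-j) B̃ Ũ`,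
hence `z^i Y = C A^i X + ∑_{j≤i} z^j G_(i-j) Ũ` with the Markov parameters `G_0 = D̃`,
`G_(k+1) = C A^k B̃`. Read column by column, this is the factorization with left factor
`P = [[0, I]; [𝒪_L, 𝒯̃_L]]`; the conjugated columns of `Ψ` are covered too, because the system
matrices are real and so conjugate data satisfy the same state equations. Since the right factor
has full row rank, the rank of the product is that of `P`, which has full column rank because
`𝒪_L` has (over `ℂ` as soon as over `ℝ`, by taking real and imaginary parts).
-/

namespace Matrix

section

variable {K : Type*} [Field K] {m n o : Type*} [Fintype n] [Fintype o]

theorem mulVec_injective_iff_rank_eq_card {A : Matrix m n K} :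
    Function.Injective A.mulVec ↔ A.rank = Fintype.card n := by
  rw [mulVec_injective_iff, linearIndependent_iff_card_eq_finrank_span, rank_eq_finrank_span_cols,
    Set.finrank, eq_comm]

theorem rank_mul_eq_left_of_rank_eq_card {A : Matrix m n K} {B : Matrix n o K}
    (hB : B.rank = Fintype.card n) : (A * B).rank = A.rank := by
  have hB_surj : LinearMap.range B.mulVecLin = ⊤ :=
    Submodule.eq_top_of_finrank_eq (hB.trans (Module.finrank_fintype_fun_eq_card K).symm)
  rw [rank, rank, mulVecLin_mul, LinearMap.range_comp_of_range_eq_top _ hB_surj]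

end

section

variable {R : Type*} {l m m₁ m₂ n k : Type*}

theorem col_mul [NonUnitalNonAssocSemiring R] [Fintype m] (A : Matrix l m R) (B : Matrix m n R)
    (j : n) : (A * B).col j = A *ᵥ B.col j :=
  rfl

theorem col_fromRows (A₁ : Matrix m₁ n R) (A₂ : Matrix m₂ n R) (j : n) :
    (fromRows A₁ A₂).col j = Sum.elim (A₁.col j) (A₂.col j) := by
  funext i
  cases i <;> rfl

theorem fromRows_fromCols_zero_one_mulVec_injective [Ring R] [Fintype n] [Fintype k]
    [DecidableEq k] {O : Matrix m n R} (T : Matrix m k R) (hO : Function.Injective O.mulVec) :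
    Function.Injective (fromRows (fromCols (0 : Matrix k n R) 1) (fromCols O T)).mulVec := by
  intro v v' h
  rw [← Sum.elim_comp_inl_inr v, ← Sum.elim_comp_inl_inr v'] at h ⊢
  simp only [fromRows_mulVec, fromCols_mulVec_sumElim, zero_mulVec, one_mulVec, zero_add,
    Sum.elim_eq_iff] at h
  obtain ⟨hb, hy⟩ := h
  rw [hb, add_left_inj] at hy
  rw [hO hy, hb]

end

end Matrix

section StateSpace

open Finset

variable {R : Type*} [CommRing R] {n ι o : Type*} [Fintype n] [Fintype ι]

def IsFreqSample (A : Matrix n n R) (B : Matrix n ι R) (C : Matrix o n R) (D : Matrix o ι R)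
    (z : R) (x : n → R) (u : ι → R) (y : o → R) : Prop :=
  z • x = A *ᵥ x + B *ᵥ u ∧ y = C *ᵥ x + D *ᵥ u

/-- The vector `W_L(z) ⊗ w`, where `W_L(z) = (1, z, …, z^(L-1))`. -/
def vandKron {α : Type*} (L : ℕ) (z : R) (w : α → R) : Fin L × α → R :=
  fun p => z ^ (p.1 : ℕ) * w p.2

variable [DecidableEq n]

def markovParameter (A : Matrix n n R) (B : Matrix n ι R) (C : Matrix o n R)
    (D : Matrix o ι R) : ℕ → Matrix o ι R
  | 0 => D
  | k + 1 => C * A ^ k * B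

/-- The lower block-triangular Toeplitz matrix `𝒯̃_L` of the Markov parameters. -/
def markovToeplitz (L : ℕ) (A : Matrix n n R) (B : Matrix n ι R) (C : Matrix o n R)
    (D : Matrix o ι R) : Matrix (Fin L × o) (Fin L × ι) R :=
  of fun p q => if (q.1 : ℕ) ≤ p.1 then markovParameter A B C D (p.1 - q.1) p.2 q.2 else 0

def obsMatrix (L : ℕ) (A : Matrix n n R) (C : Matrix o n R) : Matrix (Fin L × o) n R :=
  of fun p j => (C * A ^ (p.1 : ℕ)) p.2 j

theorem pow_smul_eq_of_smul_eq {A : Matrix n n R} {B : Matrix n ι R} {z : R} {x : n → R}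
    {u : ι → R} (h : z • x = A *ᵥ x + B *ᵥ u) (i : ℕ) :
    z ^ i • x = A ^ i *ᵥ x + ∑ j ∈ range i, z ^ j • ((A ^ (i - 1 - j) * B) *ᵥ u) := by
  have hx : (z • (1 : Matrix n n R) - A) *ᵥ x = B *ᵥ u := by
    rw [sub_mulVec, smul_mulVec, one_mulVec, h, add_sub_cancel_left]
  have hgeom := congrArg (· *ᵥ x) ((Commute.smul_left (Commute.one_left A) z).geom_sum₂_mul i)
  simp only [← mulVec_mulVec, hx, sub_mulVec, smul_pow, one_pow, smul_mulVec, one_mulVec,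
    sum_mulVec, smul_mul_assoc, one_mul] at hgeom
  rw [← sub_eq_iff_eq_add', ← hgeom]
  simp only [mulVec_mulVec]

variable {A : Matrix n n R} {B : Matrix n ι R} {C : Matrix o n R} {D : Matrix o ι R}
  {z : R} {x : n → R} {u : ι → R} {y : o → R}

theorem IsFreqSample.pow_smul_output (h : IsFreqSample A B C D z x u y) (i : ℕ) :
    z ^ i • y = (C * A ^ i) *ᵥ x
      + ∑ j ∈ range (i + 1), z ^ j • (markovParameter A B C D (i - j) *ᵥ u) := by
  rw [h.2, smul_add, ← mulVec_smul, pow_smul_eq_of_smul_eq h.1, mulVec_add, mulVec_mulVec,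
    mulVec_sum, sum_range_succ, Nat.sub_self, add_assoc]
  congr 2
  refine sum_congr rfl fun j hj => ?_
  obtain ⟨k, hk⟩ : ∃ k, i - j = k + 1 := ⟨i - 1 - j, by have := mem_range.1 hj; omega⟩
  rw [mulVec_smul, mulVec_mulVec, hk, markovParameter, ← Matrix.mul_assoc,
    show i - 1 - j = k by omega]

theorem markovToeplitz_mulVec_vandKron {L : ℕ} (i : Fin L) (p : o) :
    (markovToeplitz L A B C D *ᵥ vandKron L z u) (i, p)
      = (∑ j ∈ range (i + 1), z ^ j • (markovParameter A B C D (i - j) *ᵥ u)) p := by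
  have hfilter : (range L).filter (· ≤ (i : ℕ)) = range (i + 1) := by
    ext j
    simp only [mem_filter, mem_range]
    omega
  simp only [mulVec, dotProduct, Fintype.sum_prod_type, markovToeplitz, of_apply, vandKron,
    ite_mul, zero_mul, sum_ite_irrel, sum_const_zero, Finset.sum_apply, Pi.smul_apply,
    smul_eq_mul, mul_sum]
  rw [Fin.sum_univ_eq_sum_range (fun j => if j ≤ (i : ℕ) then
      ∑ q, markovParameter A B C D (i - j) p q * (z ^ j * u q) else 0),
    ← sum_filter, hfilter]
  exact sum_congr rfl fun j _ => sum_congr rfl fun q _ => by ring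

theorem IsFreqSample.vandKron_output (h : IsFreqSample A B C D z x u y) (L : ℕ) :
    vandKron L z y = obsMatrix L A C *ᵥ x + markovToeplitz L A B C D *ᵥ vandKron L z u := by
  funext ⟨i, p⟩
  rw [Pi.add_apply, markovToeplitz_mulVec_vandKron]
  exact congrFun (h.pow_smul_output i) p

end StateSpace

section Factorization

variable {R : Type*} [CommRing R] {n ι₁ ι₂ o : Type*} [Fintype n] [DecidableEq n]
  [Fintype ι₁] [Fintype ι₂] [DecidableEq ι₁] [DecidableEq ι₂]

/-- The left factor `[[0, I]; [𝒪_L, 𝒯̃_L]]`, with the input columns of `𝒯̃_L` grouped by the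
splitting `ι₁ ⊕ ι₂` of the input and the rows reassociated to `ι₁ ⊕ (ι₂ ⊕ o)`. -/
def factorLeft (L : ℕ) (A : Matrix n n R) (B : Matrix n (ι₁ ⊕ ι₂) R) (C : Matrix o n R)
    (D : Matrix o (ι₁ ⊕ ι₂) R) :
    Matrix ((Fin L × ι₁) ⊕ ((Fin L × ι₂) ⊕ (Fin L × o)))
      ((Fin 1 × n) ⊕ ((Fin L × ι₁) ⊕ (Fin L × ι₂))) R :=
  submatrix
    (fromRows (fromCols 0 1)
      (fromCols ((obsMatrix L A C).submatrix id (Equiv.uniqueProd n (Fin 1)))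
        ((markovToeplitz L A B C D).submatrix id (Equiv.prodSumDistrib (Fin L) ι₁ ι₂).symm)))
    (Equiv.sumAssoc _ _ _).symm (Equiv.refl _)

theorem IsFreqSample.factorLeft_mulVec {A : Matrix n n R} {B : Matrix n (ι₁ ⊕ ι₂) R}
    {C : Matrix o n R} {D : Matrix o (ι₁ ⊕ ι₂) R} {z : R} {x : n → R} {u : ι₁ → R}
    {w : ι₂ → R} {y : o → R} (h : IsFreqSample A B C D z x (Sum.elim u w) y) (L : ℕ) :
    factorLeft L A B C D *ᵥ Sum.elim (vandKron 1 z x) (Sum.elim (vandKron L z u) (vandKron L z w))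
      = Sum.elim (vandKron L z u) (Sum.elim (vandKron L z w) (vandKron L z y)) := by
  have hx : vandKron 1 z x ∘ (Equiv.uniqueProd n (Fin 1)).symm = x := by
    funext j
    simp [vandKron]
  have hu : Sum.elim (vandKron L z u) (vandKron L z w) ∘ (Equiv.prodSumDistrib (Fin L) ι₁ ι₂)
      = vandKron L z (Sum.elim u w) := by
    funext ⟨i, q⟩
    cases q <;> rfl
  rw [factorLeft, submatrix_mulVec_equiv, Equiv.refl_symm, Equiv.coe_refl, Function.comp_id,
    fromRows_mulVec, fromCols_mulVec_sumElim, zero_mulVec, one_mulVec, zero_add,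
    fromCols_mulVec_sumElim, submatrix_mulVec_equiv, submatrix_mulVec_equiv, Equiv.symm_symm, hx,
    hu, h.vandKron_output]
  funext r
  rcases r with r | r | r <;> rfl

theorem rank_factorLeft {K : Type*} [Field K] {L : ℕ} {A : Matrix n n K}
    {B : Matrix n (ι₁ ⊕ ι₂) K} {C : Matrix o n K} {D : Matrix o (ι₁ ⊕ ι₂) K}
    (hO : Function.Injective (obsMatrix L A C).mulVec) :
    (factorLeft L A B C D).rank
      = Fintype.card (Fin 1 × n) + Fintype.card ((Fin L × ι₁) ⊕ (Fin L × ι₂)) := by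
  rw [factorLeft, rank_submatrix, ← Fintype.card_sum, ← mulVec_injective_iff_rank_eq_card]
  refine fromRows_fromCols_zero_one_mulVec_injective _ fun v v' h => ?_
  simp only [submatrix_mulVec_equiv, Function.comp_id] at h
  exact (Equiv.surjective _).injective_comp_right (hO h)

end Factorization

section RealSystem

variable {m n : Type*} [Fintype n]

theorem mulVec_map_ofReal_injective {B : Matrix m n ℝ} (hB : Function.Injective B.mulVec) :
    Function.Injective (B.map ofReal).mulVec := by
  intro w w' h
  have hre : B *ᵥ (fun j => (w j).re) = B *ᵥ (fun j => (w' j).re) := by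
    funext i
    simpa [mulVec, dotProduct, re_sum] using congrArg re (congrFun h i)
  have him : B *ᵥ (fun j => (w j).im) = B *ᵥ (fun j => (w' j).im) := by
    funext i
    simpa [mulVec, dotProduct, im_sum] using congrArg im (congrFun h i)
  funext j
  exact Complex.ext (congrFun (hB hre) j) (congrFun (hB him) j)

theorem star_map_ofReal_mulVec (B : Matrix m n ℝ) (v : n → ℂ) :
    star (B.map ofReal *ᵥ v) = B.map ofReal *ᵥ star v := by
  funext i
  simp [mulVec, dotProduct, star_sum]

theorem IsFreqSample.star {ι o : Type*} [Fintype ι] {A : Matrix n n ℝ} {B : Matrix n ι ℝ}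
    {C : Matrix o n ℝ} {D : Matrix o ι ℝ} {z : ℂ} {x : n → ℂ} {u : ι → ℂ} {y : o → ℂ}
    (h : IsFreqSample (A.map ofReal) (B.map ofReal) (C.map ofReal) (D.map ofReal) z x u y) :
    IsFreqSample (A.map ofReal) (B.map ofReal) (C.map ofReal) (D.map ofReal)
      (star z) (star x) (star u) (star y) := by
  constructor
  · rw [← star_smul, h.1, star_add, star_map_ofReal_mulVec, star_map_ofReal_mulVec]
  · rw [h.2, star_add, star_map_ofReal_mulVec, star_map_ofReal_mulVec]

end RealSystem

theorem obsMat_map_ofReal (nx ny L : ℕ) (A : Matrix (Fin nx) (Fin nx) ℝ)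
    (C : Matrix (Fin ny) (Fin nx) ℝ) :
    (obsMat nx ny L A C).map ofReal = obsMatrix L (A.map ofReal) (C.map ofReal) := by
  ext p j
  change (C * A ^ (p.1 : ℕ)).map ofRealHom p.2 j
    = (C.map ofRealHom * A.map ofRealHom ^ (p.1 : ℕ)) p.2 j
  rw [Matrix.map_mul, Matrix.map_pow]

theorem PsiMat_col_inl (L M : ℕ) {α : Type} (S : Fin M → α → ℂ) (k : Fin M) :
    (PsiMat L M S).col (Sum.inl k) = vandKron L (specExp M k) (S k) :=
  rfl

theorem PsiMat_col_inr (L M : ℕ) {α : Type} (S : Fin M → α → ℂ) (k : Fin (M - 1)) :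
    (PsiMat L M S).col (Sum.inr k)
      = vandKron L (star (specExp M (k + 1))) (star (S ⟨k + 1, by omega⟩)) := by
  funext p
  simp [PsiMat, vandKron]

theorem fromRows_PsiMat_eq_factorLeft_mul {M L : ℕ} {n ι₁ ι₂ o : Type} [Fintype n]
    [DecidableEq n] [Fintype ι₁] [Fintype ι₂] [DecidableEq ι₁] [DecidableEq ι₂]
    {A : Matrix n n ℝ} {B : Matrix n (ι₁ ⊕ ι₂) ℝ} {C : Matrix o n ℝ} {D : Matrix o (ι₁ ⊕ ι₂) ℝ}
    {U : Fin M → ι₁ → ℂ} {W : Fin M → ι₂ → ℂ} {X : Fin M → n → ℂ} {Y : Fin M → o → ℂ}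
    (hss : ∀ k : Fin M, IsFreqSample (A.map ofReal) (B.map ofReal) (C.map ofReal)
      (D.map ofReal) (specExp M k) (X k) (Sum.elim (U k) (W k)) (Y k)) :
    fromRows (PsiMat L M U) (fromRows (PsiMat L M W) (PsiMat L M Y))
      = factorLeft L (A.map ofReal) (B.map ofReal) (C.map ofReal) (D.map ofReal)
        * fromRows (PsiMat 1 M X) (fromRows (PsiMat L M U) (PsiMat L M W)) := by
  refine ext_col fun c => ?_
  simp only [col_mul, col_fromRows]
  rcases c with k | k
  · simp only [PsiMat_col_inl]
    exact ((hss k).factorLeft_mulVec L).symm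
  · have h := (hss ⟨k + 1, by omega⟩).star
    rw [Function.star_sumElim] at h
    simp only [PsiMat_col_inr]
    exact (h.factorLeft_mulVec L).symm

/-- if [Ψ₁(X̂); Ψ_L(Û); Ψ_L(Ω̂)] has full row rank and 𝒪_L has full column
    rank n_x, then rank [Ψ_L(Û); Ψ_L(Ω̂); Ψ_L(Ŷ)] = (n_u + 1)L + n_x. -/
theorem rank_after_factorization (M nx nu ny L : ℕ)
    (A : Matrix (Fin nx) (Fin nx) ℝ) (Bt : Matrix (Fin nx) (Fin nu ⊕ Unit) ℝ)
    (C : Matrix (Fin ny) (Fin nx) ℝ) (Dt : Matrix (Fin ny) (Fin nu ⊕ Unit) ℝ)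
    (U : Fin M → Fin nu → ℂ) (Ω : Fin M → ℂ)
    (X : Fin M → Fin nx → ℂ) (Y : Fin M → Fin ny → ℂ)
    (hss : ∀ k : Fin M, specExp M k • X k
          = (A.map Complex.ofReal).mulVec (X k)
            + (Bt.map Complex.ofReal).mulVec (Sum.elim (U k) (fun _ => Ω k)) ∧
        Y k = (C.map Complex.ofReal).mulVec (X k)
            + (Dt.map Complex.ofReal).mulVec (Sum.elim (U k) (fun _ => Ω k)))
    (hQ : (Matrix.fromRows (PsiMat 1 M X)
            (Matrix.fromRows (PsiMat L M U) (PsiMat L M (fun k (_ : Unit) => Ω k)))).rank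
        = Fintype.card ((Fin 1 × Fin nx) ⊕ ((Fin L × Fin nu) ⊕ (Fin L × Unit))))
    (hO : (obsMat nx ny L A C).rank = nx) :
    (Matrix.fromRows (PsiMat L M U)
        (Matrix.fromRows (PsiMat L M (fun k (_ : Unit) => Ω k)) (PsiMat L M Y))).rank
      = (nu + 1) * L + nx := by
  have hO_inj : Function.Injective (obsMatrix L (A.map ofReal) (C.map ofReal)).mulVec := by
    rw [← obsMat_map_ofReal]
    exact mulVec_map_ofReal_injective
      (mulVec_injective_iff_rank_eq_card.2 (hO.trans (Fintype.card_fin nx).symm))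
  rw [fromRows_PsiMat_eq_factorLeft_mul (W := fun k _ => Ω k) hss,
    rank_mul_eq_left_of_rank_eq_card hQ, rank_factorLeft hO_inj]
  simp only [Fintype.card_sum, Fintype.card_prod, Fintype.card_fin, Fintype.card_unit]
  ring
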